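/- If B is a VRA obtained from VRAs A₁ and A₂ (with disjoint procedural alphabets over the same pushdown alphabet) by taking as components the union Λ₁ ∪ Λ₂ and a starting automaton B^S whose regular language is L_reg(A₁^S) · L_reg(A₂^S), then L(B) = L(A₁) · L(A₂). -/

import Mathlib

/-- A symbol of a pushdown alphabet: internal, call, or return. -/
inductive VSym (I C R : Type) : Type
  | int  : I → VSym I C R
  | call : C → VSym I C R
  | ret  : R → VSym I C R

/-- The set of well-matched words over a pushdown alphabet. -/
inductive WellMatched {I C R : Type} : List (VSym I C R) → Prop
  | internal (u : List I) : WellMatched (u.map VSym.int)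
  | bracket {w : List (VSym I C R)} (c : C) (r : R) :
      WellMatched w → WellMatched (VSym.call c :: w ++ [VSym.ret r])
  | concat {w₁ w₂ : List (VSym I C R)} :
      WellMatched w₁ → WellMatched w₂ → WellMatched (w₁ ++ w₂)

def VSym.isCall {I C R : Type} : VSym I C R → Bool
  | .call _ => true
  | _ => false

def VSym.isRet {I C R : Type} : VSym I C R → Bool
  | .ret _ => true
  | _ => false

/-- The depth of a word: the maximal excess of call symbols over return symbols
in any prefix (the deepest level of unmatched calls at any point). -/
def VSym.depth {I C R : Type} (w : List (VSym I C R)) : ℕ :=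
  (w.inits.map fun p => p.countP VSym.isCall - p.countP VSym.isRet).foldr max 0

/-- A visibly recursive automaton: a family of finite automata over the internal
and procedural symbols, identified by the component map `comp` (`none` denotes the
starting automaton `A^S`, `some J` the component automaton `A^J`), together with a
linking function `link` assigning to each procedural symbol a call/return pair.
Transitions of each component automaton stay within that component. -/
structure VRA (I C R P Q : Type) where
  /-- the linking function `f : Σ_proc → Σ_call × Σ_ret` -/
  link : P → C × R
  /-- the component automaton each state belongs to (`none` = starting automaton) -/
  comp : Q → Option P
  init : Q → Prop
  final : Q → Prop
  intTrans : Q → I → Q → Prop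
  procTrans : Q → P → Q → Prop
  intTrans_comp : ∀ ⦃q a p⦄, intTrans q a p → comp p = comp q
  procTrans_comp : ∀ ⦃q J p⦄, procTrans q J p → comp p = comp q

namespace VRA

variable {I C R P Q : Type}

/-- One step of a recursive run, on configurations (state, stack of states). -/
inductive Step (A : VRA I C R P Q) : Q × List Q → VSym I C R → Q × List Q → Prop
  | int {q q' : Q} {σ : List Q} {a : I} :
      A.intTrans q a q' → Step A (q, σ) (VSym.int a) (q', σ)
  | call {q q' p : Q} {σ : List Q} {J : P} {c : C} :
      A.procTrans q J p → (A.link J).1 = c → A.comp q' = some J → A.init q' →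
      Step A (q, σ) (VSym.call c) (q', p :: σ)
  | ret {q p : Q} {σ : List Q} {J : P} {r : R} :
      A.comp q = some J → A.final q → (A.link J).2 = r →
      Step A (q, p :: σ) (VSym.ret r) (p, σ)

/-- Recursive runs of a VRA. -/
inductive Run (A : VRA I C R P Q) : Q × List Q → List (VSym I C R) → Q × List Q → Prop
  | nil (cfg : Q × List Q) : Run A cfg [] cfg
  | cons {cfg₁ cfg₂ cfg₃ : Q × List Q} {a : VSym I C R} {w : List (VSym I C R)} :
      Step A cfg₁ a cfg₂ → Run A cfg₂ w cfg₃ → Run A cfg₁ (a :: w) cfg₃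

/-- The recursive language of the component automaton `A^J` (`J = none` is the
starting automaton): words with a recursive run from an initial state of the
component with empty stack to a final state of the component with empty stack. -/
def RecLang (A : VRA I C R P Q) (J : Option P) : Set (List (VSym I C R)) :=
  {w | ∃ qi qf, A.comp qi = J ∧ A.init qi ∧ A.comp qf = J ∧ A.final qf ∧
    Run A (qi, []) w (qf, [])}

/-- The language of a VRA: the recursive language of its starting automaton. -/
def Lang (A : VRA I C R P Q) : Set (List (VSym I C R)) := A.RecLang none

/-- Regular runs: runs of the component automata viewed as ordinary finite
automata over the alphabet `Σ_int ∪ Σ_proc`. -/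
inductive RegRun (A : VRA I C R P Q) : Q → List (I ⊕ P) → Q → Prop
  | nil (q : Q) : RegRun A q [] q
  | int {q q' p : Q} {a : I} {w : List (I ⊕ P)} :
      A.intTrans q a q' → RegRun A q' w p → RegRun A q (Sum.inl a :: w) p
  | proc {q q' p : Q} {J : P} {w : List (I ⊕ P)} :
      A.procTrans q J q' → RegRun A q' w p → RegRun A q (Sum.inr J :: w) p

/-- The regular language of the component automaton `A^J`, over `Σ_int ∪ Σ_proc`. -/
def RegLang (A : VRA I C R P Q) (J : Option P) : Set (List (I ⊕ P)) :=
  {w | ∃ qi qf, A.comp qi = J ∧ A.init qi ∧ A.comp qf = J ∧ A.final qf ∧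
    RegRun A qi w qf}

/-- A VRA is codeterministic if component automata linked to the same call/return
pair have pairwise disjoint recursive languages. -/
def Codeterministic (A : VRA I C R P Q) : Prop :=
  ∀ J J' : P, J ≠ J' → A.link J = A.link J' →
    A.RecLang (some J) ∩ A.RecLang (some J') = ∅

/-- A VRA is complete if every state has an outgoing transition on every symbol of
`Σ_int ∪ Σ_proc`, and for every call/return pair the recursive languages of the
linked component automata cover all well-matched words. -/
def Complete (A : VRA I C R P Q) : Prop :=
  (∀ (q : Q) (a : I), ∃ p, A.intTrans q a p) ∧
  (∀ (q : Q) (J : P), ∃ p, A.procTrans q J p) ∧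
  (∀ (c : C) (r : R),
    (⋃ J ∈ {J : P | A.link J = (c, r)}, A.RecLang (some J)) = {w | WellMatched w})

/-- A VRA is deterministic if every component automaton (including the starting
one) has a unique initial state and deterministic transitions, and procedural
transitions from a common state on procedural symbols with the same call symbol
agree on the procedural symbol. -/
def Deterministic (A : VRA I C R P Q) : Prop :=
  (∀ J : Option P, ∃! q, A.comp q = J ∧ A.init q) ∧
  (∀ q a p p', A.intTrans q a p → A.intTrans q a p' → p = p') ∧
  (∀ q J p p', A.procTrans q J p → A.procTrans q J p' → p = p') ∧
  (∀ q J J' p p', A.procTrans q J p → A.procTrans q J' p' →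
    (A.link J).1 = (A.link J').1 → J = J')

/-- All component automata of the VRA are complete DFAs: a unique initial state in
each component and exactly one outgoing transition per state and symbol. -/
def AllCompleteDFA (A : VRA I C R P Q) : Prop :=
  (∀ J : Option P, ∃! q, A.comp q = J ∧ A.init q) ∧
  (∀ (q : Q) (a : I), ∃! p, A.intTrans q a p) ∧
  (∀ (q : Q) (J : P), ∃! p, A.procTrans q J p)

/-- The size of a VRA: number of states plus number of transitions. -/
noncomputable def size (A : VRA I C R P Q) : ℕ :=
  Nat.card Q + Nat.card {t : Q × I × Q // A.intTrans t.1 t.2.1 t.2.2}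
    + Nat.card {t : Q × P × Q // A.procTrans t.1 t.2.1 t.2.2}

end VRA

/-!
A word lies in the recursive language of a component iff it has an *abstraction* in the
regular language of that component: an abstraction replaces each outermost matched block
`c u r` by a procedural symbol `J` linked to `⟨c, r⟩` whose component accepts `u`.
Abstractions split along concatenations, and since the components of `B` are those of `A₁`
and `A₂`, an abstraction for `B` over procedural symbols of `A₁` (resp. `A₂`) is the same as
an abstraction for `A₁` (resp. `A₂`). Hence `L(B)`, the set of words with an abstraction in
`L_reg(A₁^S) · L_reg(A₂^S)`, is `L(A₁) · L(A₂)`.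
-/

namespace VRA

variable {I C R P Q : Type}

inductive Abstraction (A : VRA I C R P Q) : List (VSym I C R) → List (I ⊕ P) → Prop
  | nil : Abstraction A [] []
  | int {w x} {a : I} : Abstraction A w x → Abstraction A (VSym.int a :: w) (Sum.inl a :: x)
  | proc {w x u} {J : P} {c : C} {r : R} :
      (A.link J).1 = c → (A.link J).2 = r → u ∈ A.RecLang (some J) →
      Abstraction A w x → Abstraction A (VSym.call c :: (u ++ VSym.ret r :: w)) (Sum.inr J :: x)

theorem Run.append {A : VRA I C R P Q} {c₁ c₂ c₃ : Q × List Q}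
    {w₁ w₂ : List (VSym I C R)}
    (h₁ : Run A c₁ w₁ c₂) (h₂ : Run A c₂ w₂ c₃) : Run A c₁ (w₁ ++ w₂) c₃ := by
  induction h₁ with
  | nil => exact h₂
  | cons s _ ih => exact .cons s (ih h₂)

theorem Step.append_stack {A : VRA I C R P Q} {c₁ c₂ : Q × List Q} {a : VSym I C R}
    (h : Step A c₁ a c₂) (τ : List Q) :
    Step A (c₁.1, c₁.2 ++ τ) a (c₂.1, c₂.2 ++ τ) := by
  cases h with
  | int h => exact .int h
  | call h h1 h2 h3 => exact .call h h1 h2 h3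
  | ret h1 h2 h3 => exact .ret h1 h2 h3

theorem Run.append_stack {A : VRA I C R P Q} {c₁ c₂ : Q × List Q} {w : List (VSym I C R)}
    (h : Run A c₁ w c₂) (τ : List Q) :
    Run A (c₁.1, c₁.2 ++ τ) w (c₂.1, c₂.2 ++ τ) := by
  induction h with
  | nil => exact .nil _
  | cons s _ ih => exact .cons (s.append_stack τ) ih

theorem RegRun.comp_eq {A : VRA I C R P Q} {q q' : Q} {x : List (I ⊕ P)}
    (h : RegRun A q x q') : A.comp q' = A.comp q := by
  induction h with
  | nil => rfl
  | int ht _ ih => exact ih.trans (A.intTrans_comp ht)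
  | proc ht _ ih => exact ih.trans (A.procTrans_comp ht)

theorem Abstraction.run {A : VRA I C R P Q} {w : List (VSym I C R)} {x : List (I ⊕ P)}
    (h : Abstraction A w x) {q q' : Q} (hx : RegRun A q x q') : Run A (q, []) w (q', []) := by
  induction h generalizing q with
  | nil => cases hx; exact .nil _
  | int _ ih =>
    cases hx with
    | int ht hx => exact .cons (.int ht) (ih hx)
  | proc hc hr hu _ ih =>
    cases hx with
    | @proc _ p _ _ _ ht hx =>
      obtain ⟨qi, qf, hci, hii, hcf, hff, hrun⟩ := hu
      exact .cons (.call ht hc hci hii)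
        ((hrun.append_stack [p]).append (.cons (.ret hcf hff hr) (ih hx)))

/-- `StackDecomp A q σ w q'` describes a run from `(q, σ)` to `(q', [])` reading `w`: the
component of `q` reads an abstracted word up to a final state, the return symbol pops the top
`p` of `σ`, and the run goes on from `p`; at the empty stack only the first part remains. -/
inductive StackDecomp (A : VRA I C R P Q) : Q → List Q → List (VSym I C R) → Q → Prop
  | base {q q' : Q} {w x} : Abstraction A w x → RegRun A q x q' → StackDecomp A q [] w q'
  | pop {q p : Q} {σ : List Q} {w₁ w₂ : List (VSym I C R)} {x} {qf : Q} {J : P}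
      {r : R} {q' : Q} :
      Abstraction A w₁ x → RegRun A q x qf → A.comp qf = some J → A.final qf →
      (A.link J).2 = r → StackDecomp A p σ w₂ q' →
      StackDecomp A q (p :: σ) (w₁ ++ VSym.ret r :: w₂) q'

theorem StackDecomp.cons_int {A : VRA I C R P Q} {q q₂ q' : Q} {σ : List Q} {a : I}
    {w : List (VSym I C R)} (h : A.intTrans q a q₂) (hd : StackDecomp A q₂ σ w q') :
    StackDecomp A q σ (VSym.int a :: w) q' := by
  cases hd with
  | base ha hx => exact .base ha.int (.int h hx)
  | pop ha hx hcf hff hr hd => simpa using pop ha.int (.int h hx) hcf hff hr hd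

theorem StackDecomp.cons_proc {A : VRA I C R P Q} {q p q' : Q} {σ : List Q}
    {w u : List (VSym I C R)} {J : P} {c : C} {r : R}
    (hp : A.procTrans q J p) (hc : (A.link J).1 = c) (hr : (A.link J).2 = r)
    (hu : u ∈ A.RecLang (some J)) (hd : StackDecomp A p σ w q') :
    StackDecomp A q σ (VSym.call c :: (u ++ VSym.ret r :: w)) q' := by
  cases hd with
  | base ha hx => exact .base (.proc hc hr hu ha) (.proc hp hx)
  | pop ha hx hcf hff hr' hd =>
    simpa using pop (.proc hc hr hu ha) (.proc hp hx) hcf hff hr' hd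

theorem Run.stackDecomp {A : VRA I C R P Q} {c₁ : Q × List Q} {w : List (VSym I C R)}
    {q' : Q} (h : Run A c₁ w (q', [])) : StackDecomp A c₁.1 c₁.2 w q' := by
  generalize hc₂ : (q', ([] : List Q)) = c₂ at h
  induction h with
  | nil => subst hc₂; exact .base .nil (.nil _)
  | cons s _ ih =>
    cases s with
    | int ht => exact .cons_int ht (ih hc₂)
    | call hp hc hci hii =>
      cases ih hc₂ with
      | pop ha hx hcf hff hr hd =>
        -- the call's component is the one that reaches the final state `qf` before the return
        obtain rfl : _ = _ := Option.some.inj (hcf.symm.trans (hx.comp_eq.trans hci))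
        exact .cons_proc hp hc hr ⟨_, _, hci, hii, hcf, hff, ha.run hx⟩ hd
    | ret hcf hff hr => exact .pop .nil (.nil _) hcf hff hr (ih hc₂)

theorem mem_recLang_iff {A : VRA I C R P Q} {J : Option P} {w : List (VSym I C R)} :
    w ∈ A.RecLang J ↔ ∃ x, Abstraction A w x ∧ x ∈ A.RegLang J := by
  constructor
  · rintro ⟨qi, qf, hci, hii, hcf, hff, hrun⟩
    cases hrun.stackDecomp with
    | base ha hx => exact ⟨_, ha, qi, qf, hci, hii, hcf, hff, hx⟩
  · rintro ⟨x, ha, qi, qf, hci, hii, hcf, hff, hx⟩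
    exact ⟨qi, qf, hci, hii, hcf, hff, ha.run hx⟩

theorem abstraction_append_iff {A : VRA I C R P Q} {w : List (VSym I C R)}
    {x₁ x₂ : List (I ⊕ P)} :
    Abstraction A w (x₁ ++ x₂) ↔
      ∃ w₁ w₂, w = w₁ ++ w₂ ∧ Abstraction A w₁ x₁ ∧ Abstraction A w₂ x₂ := by
  constructor
  · intro h
    induction x₁ generalizing w with
    | nil => exact ⟨[], w, rfl, .nil, h⟩
    | cons y x₁ ih =>
      cases h with
      | int h =>
        obtain ⟨w₁, w₂, rfl, h₁, h₂⟩ := ih h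
        exact ⟨_ :: w₁, w₂, rfl, h₁.int, h₂⟩
      | proc hc hr hu h =>
        obtain ⟨w₁, w₂, rfl, h₁, h₂⟩ := ih h
        exact ⟨_, w₂, by simp, .proc hc hr hu h₁, h₂⟩
  · rintro ⟨w₁, w₂, rfl, h₁, h₂⟩
    induction h₁ with
    | nil => exact h₂
    | int _ ih => exact ih.int
    | proc hc hr hu _ ih => simpa using Abstraction.proc hc hr hu ih

theorem abstraction_map_iff {P' Q' : Type} {A : VRA I C R P Q} {B : VRA I C R P' Q'}
    (f : P → P') (hl : ∀ J, B.link (f J) = A.link J)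
    (hr : ∀ J, B.RecLang (some (f J)) = A.RecLang (some J))
    {w : List (VSym I C R)} {x : List (I ⊕ P)} :
    Abstraction B w (x.map (Sum.map id f)) ↔ Abstraction A w x := by
  constructor
  · intro h
    induction x generalizing w with
    | nil => cases h; exact .nil
    | cons y x ih =>
      cases y with
      | inl a =>
        cases h with
        | int h => exact (ih h).int
      | inr J =>
        cases h with
        | proc hc hrr hu h =>
          exact .proc (hl J ▸ hc) (hl J ▸ hrr) (hr J ▸ hu) (ih h)
  · intro h
    induction h with
    | nil => exact .nil
    | int _ ih => exact ih.int
    | @proc _ _ _ J _ _ hc hrr hu _ ih =>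
      exact .proc ((hl J).symm ▸ hc) ((hl J).symm ▸ hrr) ((hr J).symm ▸ hu) ih

end VRA

/-- if `B` is obtained from VRAs `A₁`, `A₂` (with disjoint
procedural alphabets, modeled by the sum type `P₁ ⊕ P₂`) by taking the union of
their component automata (so the linking function and the recursive languages of
the components carry over) and a starting automaton whose regular language is the
concatenation `L_reg(A₁^S) · L_reg(A₂^S)`, then `L(B) = L(A₁) · L(A₂)`. -/
theorem VRA.concat_construction {I C R P₁ P₂ Q₁ Q₂ QB : Type}
    (A₁ : VRA I C R P₁ Q₁) (A₂ : VRA I C R P₂ Q₂)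
    (B : VRA I C R (P₁ ⊕ P₂) QB)
    (hlink : B.link = Sum.elim A₁.link A₂.link)
    (hrec₁ : ∀ J : P₁, B.RecLang (some (Sum.inl J)) = A₁.RecLang (some J))
    (hrec₂ : ∀ J : P₂, B.RecLang (some (Sum.inr J)) = A₂.RecLang (some J))
    (hreg : B.RegLang none =
      {w | ∃ u ∈ A₁.RegLang none, ∃ v ∈ A₂.RegLang none,
        w = u.map (Sum.map id Sum.inl) ++ v.map (Sum.map id Sum.inr)}) :
    B.Lang = {w | ∃ u ∈ A₁.Lang, ∃ v ∈ A₂.Lang, w = u ++ v} := by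
  have habs₁ {w x} : Abstraction B w (x.map (Sum.map id Sum.inl)) ↔ Abstraction A₁ w x :=
    abstraction_map_iff Sum.inl (by simp [hlink]) hrec₁
  have habs₂ {w x} : Abstraction B w (x.map (Sum.map id Sum.inr)) ↔ Abstraction A₂ w x :=
    abstraction_map_iff Sum.inr (by simp [hlink]) hrec₂
  ext w
  simp only [Lang, mem_recLang_iff, hreg]
  constructor
  · rintro ⟨_, ha, u, hu, v, hv, rfl⟩
    obtain ⟨w₁, w₂, rfl, h₁, h₂⟩ := abstraction_append_iff.mp ha
    exact ⟨w₁, ⟨u, habs₁.mp h₁, hu⟩, w₂, ⟨v, habs₂.mp h₂, hv⟩, rfl⟩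
  · rintro ⟨w₁, ⟨u, h₁, hu⟩, w₂, ⟨v, h₂, hv⟩, rfl⟩
    exact ⟨_, abstraction_append_iff.mpr ⟨w₁, w₂, rfl, habs₁.mpr h₁, habs₂.mpr h₂⟩,
      u, hu, v, hv, rfl⟩
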